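/- Among all noncommutative polynomials equipollent to a given polynomial p in the free associative algebra on X₁,…,Xₙ over a field of characteristic zero, there exists exactly one regular polynomial; equivalently, two distinct regular polynomials are never equipollent. -/
import Mathlib

open scoped BigOperators

set_option linter.unusedSectionVars false

noncomputable section

/-- The word `X₁^{α₁} ⋯ Xₙ^{αₙ}` as a list of generator indices. -/
def word (n : ℕ) (α : Fin n → ℕ) : List (Fin n) :=
  (List.finRange n).flatMap fun i => List.replicate (α i) i

/-- The symmetrization `symz(X^(α)) = (1/m!) ∑_{σ ∈ Σₘ} X'_{σ(1)} ⋯ X'_{σ(m)}`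
of the monomial `X^(α)` in the free associative algebra. -/
def symz (K : Type) [Field K] (n : ℕ) (α : Fin n → ℕ) : FreeAlgebra K (Fin n) :=
  ((Nat.factorial (word n α).length : K))⁻¹ •
    ∑ σ : Equiv.Perm (Fin (word n α).length),
      (List.ofFn fun j => FreeAlgebra.ι K ((word n α).get (σ j))).prod

/-- Regular homogeneous polynomials of degree `m`: the span of `m`-th powers of
linear forms in the generators. -/
def RegHom (K : Type) [Field K] (n m : ℕ) : Submodule K (FreeAlgebra K (Fin n)) :=
  Submodule.span K {x | ∃ c : Fin n → K, x = (∑ i, c i • FreeAlgebra.ι K i) ^ m}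

/-- Regular polynomials: the span of all powers of linear forms in the generators. -/
def Reg (K : Type) [Field K] (n : ℕ) : Submodule K (FreeAlgebra K (Fin n)) :=
  Submodule.span K {x | ∃ (m : ℕ) (c : Fin n → K), x = (∑ i, c i • FreeAlgebra.ι K i) ^ m}

/-- The symmetrization map `Φ` from commutative polynomials to the free algebra,
sending `x^(α)` to `symz(X^(α))` and extended linearly. -/
def Phi (K : Type) [Field K] (n : ℕ) (p : MvPolynomial (Fin n) K) : FreeAlgebra K (Fin n) :=
  ∑ d ∈ p.support, p.coeff d • symz K n (fun i => d i)

/-- The natural "abelianization" map identifying equipollent polynomials: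
two polynomials of the free algebra are equipollent iff they have the same image. -/
def commMap (K : Type) [Field K] (n : ℕ) :
    FreeAlgebra K (Fin n) →ₐ[K] MvPolynomial (Fin n) K :=
  FreeAlgebra.lift K MvPolynomial.X

namespace EqpAux

open Finset

variable {n : ℕ}

lemma count_ofFn : ∀ (m : ℕ) (g : Fin m → Fin n) (x : Fin n),
    (List.ofFn g).count x = #(univ.filter fun j => g j = x)
  | 0, g, x => by simp
  | (m+1), g, x => by
    rw [List.ofFn_succ, List.count_cons, count_ofFn m (fun i => g i.succ) x]
    rw [Finset.card_filter, Finset.card_filter, Fin.sum_univ_succ]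
    simp only [beq_iff_eq]
    exact add_comm _ _

lemma sum_count (l : List (Fin n)) : ∑ i, l.count i = l.length := by
  induction l with
  | nil => simp
  | cons a l ih =>
    simp only [List.count_cons, List.length_cons, Finset.sum_add_distrib, ih]
    simp [Finset.sum_ite_eq]

lemma count_word (α : Fin n → ℕ) (i : Fin n) : (word n α).count i = α i := by
  have key : ∀ L : List (Fin n), L.Nodup → i ∈ L →
      (L.flatMap fun j => List.replicate (α j) j).count i = α i := by
    intro L
    induction L with
    | nil => simp
    | cons a L ih =>
      intro hnd hmem
      rw [List.flatMap_cons, List.count_append, List.count_replicate]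
      rcases List.mem_cons.mp hmem with h | h
      · subst h
        have : i ∉ L := (List.nodup_cons.mp hnd).1
        have hz : (L.flatMap fun j => List.replicate (α j) j).count i = 0 := by
          rw [List.count_eq_zero]
          intro hc
          rcases List.mem_flatMap.mp hc with ⟨j, hj, hij⟩
          rcases List.eq_of_mem_replicate hij with rfl
          exact this hj
        simp [hz]
      · have hne : a ≠ i := by rintro rfl; exact (List.nodup_cons.mp hnd).1 h
        rw [ih (List.nodup_cons.mp hnd).2 h]
        simp [if_neg hne]
  exact key (List.finRange n) (List.nodup_finRange n) (List.mem_finRange i)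

lemma length_word (α : Fin n → ℕ) : (word n α).length = ∑ i, α i := by
  rw [← sum_count (word n α)]
  exact Finset.sum_congr rfl fun i _ => count_word α i


lemma exists_comp_perm {m : ℕ} (g₁ g₂ : Fin m → Fin n)
    (h : ∀ i, #(univ.filter fun j => g₁ j = i) = #(univ.filter fun j => g₂ j = i)) :
    ∃ τ : Equiv.Perm (Fin m), g₂ = g₁ ∘ τ := by
  classical
  have fib : ∀ i : Fin n, {j : Fin m // g₂ j = i} ≃ {j : Fin m // g₁ j = i} := by
    intro i
    apply Fintype.equivOfCardEq
    rw [Fintype.card_subtype, Fintype.card_subtype, ← h i]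
  refine ⟨((Equiv.sigmaFiberEquiv g₂).symm.trans
      ((Equiv.sigmaCongrRight fib).trans (Equiv.sigmaFiberEquiv g₁))), ?_⟩
  funext j
  simp only [Function.comp_apply, Equiv.coe_trans]
  have h2 : (Equiv.sigmaFiberEquiv g₂).symm j = ⟨g₂ j, ⟨j, rfl⟩⟩ := rfl
  rw [h2]
  have h3 : (Equiv.sigmaCongrRight fib) ⟨g₂ j, ⟨j, rfl⟩⟩ = ⟨g₂ j, fib (g₂ j) ⟨j, rfl⟩⟩ := rfl
  show g₂ j = g₁ ((Equiv.sigmaFiberEquiv g₁) ((Equiv.sigmaCongrRight fib) ⟨g₂ j, ⟨j, rfl⟩⟩))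
  rw [h3]
  exact ((fib (g₂ j) ⟨j, rfl⟩).2).symm

/-- the symmetrization sum of a tuple of generators -/
def S (K : Type) [Field K] (n m : ℕ) (g : Fin m → Fin n) : FreeAlgebra K (Fin n) :=
  ∑ σ : Equiv.Perm (Fin m), (List.ofFn fun j => FreeAlgebra.ι K (g (σ j))).prod

/-- fiber count of a tuple, as a Finsupp -/
def content {m : ℕ} (g : Fin m → Fin n) : Fin n →₀ ℕ :=
  Finsupp.equivFunOnFinite.symm fun i => #(univ.filter fun j => g j = i)

lemma content_apply {m : ℕ} (g : Fin m → Fin n) (i : Fin n) :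
    content g i = #(univ.filter fun j => g j = i) := rfl

variable (K : Type) [Field K]

lemma symz_eq (α : Fin n → ℕ) :
    symz K n α
      = (((word n α).length.factorial : K))⁻¹ • S K n (word n α).length (word n α).get := rfl

lemma S_eq_of_fibers (m₁ m₂ : ℕ) (h : m₁ = m₂) (g₁ : Fin m₁ → Fin n) (g₂ : Fin m₂ → Fin n)
    (hc : ∀ i, #(univ.filter fun j => g₁ j = i) = #(univ.filter fun j => g₂ j = i)) :
    S K n m₁ g₁ = S K n m₂ g₂ := by
  subst h
  obtain ⟨τ, rfl⟩ := exists_comp_perm g₁ g₂ hc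
  unfold S
  refine (Fintype.sum_equiv (Equiv.mulLeft τ) _ _ fun σ => rfl).symm

lemma commMap_prod {m : ℕ} (g : Fin m → Fin n) :
    commMap K n (List.ofFn fun k => FreeAlgebra.ι K (g k)).prod
      = MvPolynomial.monomial (content g) 1 := by
  rw [map_list_prod, List.map_ofFn, List.prod_ofFn]
  have h1 : ∀ k, (commMap K n ∘ fun k => FreeAlgebra.ι K (g k)) k = MvPolynomial.X (g k) := by
    intro k
    simp [commMap, FreeAlgebra.lift_ι_apply]
  rw [Finset.prod_congr rfl fun k _ => h1 k]
  rw [MvPolynomial.monomial_eq, map_one, one_mul, Finsupp.prod_pow]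
  rw [← Finset.prod_fiberwise univ (fun j => g j)
    (fun j => (MvPolynomial.X (g j) : MvPolynomial (Fin n) K))]
  refine Finset.prod_congr rfl fun i _ => ?_
  rw [content_apply]
  rw [Finset.prod_congr rfl
    (fun j hj => by rw [(Finset.mem_filter.mp hj).2] : ∀ j ∈ univ.filter fun j => g j = i,
      (MvPolynomial.X (g j) : MvPolynomial (Fin n) K) = MvPolynomial.X i)]
  rw [Finset.prod_const]

lemma content_comp_perm {m : ℕ} (g : Fin m → Fin n) (σ : Equiv.Perm (Fin m)) :
    content (fun j => g (σ j)) = content g := by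
  ext i
  rw [content_apply, content_apply, Finset.card_filter, Finset.card_filter]
  exact Equiv.sum_comp σ (fun j => if g j = i then 1 else 0)

lemma content_get (l : List (Fin n)) (i : Fin n) : content l.get i = l.count i := by
  rw [content_apply, ← count_ofFn l.length l.get i, List.ofFn_get]

lemma content_word (α : Fin n → ℕ) : content (word n α).get = Finsupp.equivFunOnFinite.symm α := by
  ext i
  rw [content_get, count_word]
  rfl

variable [CharZero K]

lemma commMap_S {m : ℕ} (g : Fin m → Fin n) :
    commMap K n (S K n m g) = (m.factorial : ℕ) • MvPolynomial.monomial (content g) 1 := by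
  unfold S
  rw [map_sum]
  rw [Finset.sum_congr rfl fun σ _ => (commMap_prod K (fun j => g (σ j))).trans
    (by rw [content_comp_perm])]
  rw [Finset.sum_const, Finset.card_univ, Fintype.card_perm, Fintype.card_fin]

lemma commMap_symz (α : Fin n → ℕ) :
    commMap K n (symz K n α) = MvPolynomial.monomial (Finsupp.equivFunOnFinite.symm α) 1 := by
  rw [symz_eq, map_smul, commMap_S, content_word, ← Nat.cast_smul_eq_nsmul K, smul_smul,
    inv_mul_cancel₀ (by exact_mod_cast (word n α).length.factorial_ne_zero), one_smul]


omit [CharZero K] in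
lemma Phi_eq_sum_of_subset (p : MvPolynomial (Fin n) K) (t : Finset (Fin n →₀ ℕ))
    (h : p.support ⊆ t) :
    Phi K n p = ∑ d ∈ t, p.coeff d • symz K n (fun i => d i) :=
  Finset.sum_subset h (fun d _ hd => by
    rw [MvPolynomial.notMem_support_iff.mp hd, zero_smul])

omit [CharZero K] in
lemma Phi_add (p q : MvPolynomial (Fin n) K) : Phi K n (p + q) = Phi K n p + Phi K n q := by
  rw [Phi_eq_sum_of_subset K (p+q) (p.support ∪ q.support)
      (MvPolynomial.support_add ..),
    Phi_eq_sum_of_subset K p (p.support ∪ q.support) Finset.subset_union_left,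
    Phi_eq_sum_of_subset K q (p.support ∪ q.support) Finset.subset_union_right,
    ← Finset.sum_add_distrib]
  exact Finset.sum_congr rfl fun d _ => by rw [MvPolynomial.coeff_add, add_smul]

omit [CharZero K] in
lemma Phi_smul (c : K) (p : MvPolynomial (Fin n) K) : Phi K n (c • p) = c • Phi K n p := by
  rw [Phi_eq_sum_of_subset K (c • p) p.support (MvPolynomial.support_smul),
    Phi, Finset.smul_sum]
  exact Finset.sum_congr rfl fun d _ => by
    rw [MvPolynomial.coeff_smul, smul_eq_mul, mul_smul]

omit [CharZero K] in
lemma Phi_monomial (d : Fin n →₀ ℕ) (c : K) :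
    Phi K n (MvPolynomial.monomial d c) = c • symz K n (fun i => d i) := by
  classical
  by_cases hc : c = 0
  · subst hc
    rw [Phi]
    simp
  · rw [Phi, MvPolynomial.support_monomial, if_neg hc, Finset.sum_singleton,
      MvPolynomial.coeff_monomial, if_pos rfl]

lemma commMap_Phi (q : MvPolynomial (Fin n) K) : commMap K n (Phi K n q) = q := by
  rw [Phi, map_sum]
  have h : ∀ d ∈ q.support, commMap K n (q.coeff d • symz K n fun i => d i)
      = MvPolynomial.monomial d (q.coeff d) := by
    intro d _
    rw [map_smul, commMap_symz, Finsupp.equivFunOnFinite_symm_coe,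
      MvPolynomial.smul_monomial, smul_eq_mul, mul_one]
  rw [Finset.sum_congr rfl h]
  exact q.support_sum_monomial_coeff

/-- the word lemma : `Φ ∘ commMap` symmetrizes words -/
lemma Phi_commMap_prod {m : ℕ} (f : Fin m → Fin n) :
    Phi K n (commMap K n (List.ofFn fun k => FreeAlgebra.ι K (f k)).prod)
      = ((m.factorial : K))⁻¹ • S K n m f := by
  rw [commMap_prod, Phi_monomial, one_smul]
  have hβ : ∀ i, (fun i => content f i) i = content f i := fun _ => rfl
  set β : Fin n → ℕ := fun i => content f i with hβdef
  have hlen : (word n β).length = m := by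
    rw [← sum_count (word n β),
      Finset.sum_congr rfl fun i _ => count_word β i]
    have : ∀ i, β i = #(univ.filter fun j => f j = i) := fun i => rfl
    rw [Finset.sum_congr rfl fun i _ => this i]
    rw [← Finset.card_eq_sum_card_fiberwise (fun j _ => Finset.mem_univ (f j))]
    exact Finset.card_univ.trans (Fintype.card_fin m)
  have hfib : ∀ i, #(univ.filter fun j => (word n β).get j = i)
      = #(univ.filter fun j => f j = i) := by
    intro i
    rw [← content_apply, ← content_apply, content_get, count_word]
  rw [symz_eq, S_eq_of_fibers K _ _ hlen (word n β).get f hfib, hlen]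


omit [CharZero K] in
lemma pow_sum_expand {A : Type} [Ring A] {β : Type*} [DecidableEq β] (s : Finset β) (y : β → A) :
    ∀ m : ℕ, (∑ j ∈ s, y j) ^ m
      = ∑ f ∈ Fintype.piFinset (fun _ : Fin m => s), (List.ofFn fun k => y (f k)).prod
  | 0 => by
    rw [pow_zero]
    rw [Finset.sum_congr rfl fun f _ => by
      rw [List.ofFn_zero, List.prod_nil]]
    rw [Finset.sum_const, Fintype.card_piFinset]
    simp
  | (m+1) => by
    rw [pow_succ, pow_sum_expand s y m, Finset.sum_mul_sum]
    rw [← Finset.sum_product']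
    refine Finset.sum_nbij' (fun p => Fin.snoc p.1 p.2) (fun g => (Fin.init g, g (Fin.last m)))
      ?_ ?_ ?_ ?_ ?_
    · rintro ⟨f, j⟩ hp
      rw [Finset.mem_product] at hp
      rw [Fintype.mem_piFinset]
      intro k
      induction k using Fin.lastCases with
      | last => simp only [Fin.snoc_last]; exact hp.2
      | cast k => simp only [Fin.snoc_castSucc]; exact Fintype.mem_piFinset.mp hp.1 k
    · intro g hg
      rw [Finset.mem_product]
      exact ⟨Fintype.mem_piFinset.mpr fun k => Fintype.mem_piFinset.mp hg k.castSucc,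
        Fintype.mem_piFinset.mp hg (Fin.last m)⟩
    · rintro ⟨f, j⟩ _
      simp [Fin.init_snoc, Fin.snoc_last]
    · intro g _
      exact Fin.snoc_init_self g
    · rintro ⟨f, j⟩ _
      rw [List.ofFn_succ', List.prod_concat]
      simp only [Fin.snoc_last, Fin.snoc_castSucc]

omit [CharZero K] in
lemma neg_one_pow_sub {a b : ℕ} (h : b ≤ a) : (-1:K)^(a-b) = (-1)^a * (-1)^b := by
  have h1 : (-1:K)^(a-b) * (-1)^b = (-1)^a := by
    rw [← pow_add, Nat.sub_add_cancel h]
  have h2 : ((-1:K)^b) * (-1)^b = 1 := by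
    rw [← pow_add]
    exact Even.neg_one_pow ⟨b, rfl⟩
  calc (-1:K)^(a-b) = (-1:K)^(a-b) * ((-1)^b * (-1)^b) := by rw [h2, mul_one]
    _ = ((-1:K)^(a-b) * (-1)^b) * (-1)^b := by ring
    _ = (-1)^a * (-1)^b := by rw [h1]

omit [CharZero K] in
lemma sum_indicator (m : ℕ) (R : Finset (Fin m)) :
    ∑ T : Finset (Fin m), (if R ⊆ T then (-1:K)^(m - #T) else 0)
      = if R = univ then 1 else 0 := by
  classical
  have h1 : ∀ T : Finset (Fin m), (if R ⊆ T then (-1:K)^(m - #T) else 0)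
      = (-1)^m * (if R ⊆ T then (-1:K)^#T else 0) := by
    intro T
    by_cases h : R ⊆ T
    · rw [if_pos h, if_pos h, neg_one_pow_sub K
        ((Finset.card_le_univ T).trans_eq (by simp))]
    · rw [if_neg h, if_neg h, mul_zero]
  rw [Finset.sum_congr rfl fun T _ => h1 T, ← Finset.mul_sum]
  have h2 : ∑ T : Finset (Fin m), (if R ⊆ T then (-1:K)^#T else 0)
      = ∑ T ∈ univ.filter (fun T => R ⊆ T), (-1:K)^#T := by
    rw [Finset.sum_filter]
  rw [h2]
  have h3 : ∑ T ∈ univ.filter (fun T => R ⊆ T), (-1:K)^#T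
      = ∑ U ∈ Rᶜ.powerset, (-1:K)^(#R + #U) := by
    refine Finset.sum_nbij' (fun T => T \ R) (fun U => R ∪ U) ?_ ?_ ?_ ?_ ?_
    · intro T hT
      rw [Finset.mem_powerset]
      intro x hx
      rw [Finset.mem_sdiff] at hx
      rw [Finset.mem_compl]
      exact hx.2
    · intro U hU
      rw [Finset.mem_filter]
      exact ⟨Finset.mem_univ _, Finset.subset_union_left⟩
    · intro T hT
      exact Finset.union_sdiff_of_subset (Finset.mem_filter.mp hT).2
    · intro U hU
      exact Finset.union_sdiff_cancel_left
        (Disjoint.mono_right (Finset.mem_powerset.mp hU) disjoint_compl_right)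
    · intro T hT
      have hd : #R + #(T \ R) = #T := by
        rw [← Finset.card_union_of_disjoint Finset.disjoint_sdiff,
          Finset.union_sdiff_of_subset (Finset.mem_filter.mp hT).2]
      rw [hd]
  rw [h3]
  have h4 : ∑ U ∈ Rᶜ.powerset, (-1:K)^(#R + #U)
      = (-1)^#R * ∑ U ∈ Rᶜ.powerset, (-1:K)^#U := by
    rw [Finset.mul_sum]
    exact Finset.sum_congr rfl fun U _ => by rw [pow_add]
  have h5 : ∑ U ∈ Rᶜ.powerset, (-1:K)^#U = if Rᶜ = ∅ then 1 else 0 := by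
    have hz := Finset.sum_powerset_neg_one_pow_card (x := Rᶜ)
    calc ∑ U ∈ Rᶜ.powerset, (-1:K)^#U
        = ((∑ U ∈ Rᶜ.powerset, (-1:ℤ)^#U : ℤ) : K) := by push_cast; rfl
      _ = ((if Rᶜ = ∅ then 1 else 0 : ℤ) : K) := by rw [hz]
      _ = if Rᶜ = ∅ then 1 else 0 := by push_cast; rfl
  rw [h4, h5]
  by_cases hR : R = univ
  · rw [if_pos hR, if_pos (by rw [hR, Finset.compl_univ])]
    subst hR
    rw [Finset.card_univ, Fintype.card_fin, mul_one, ← pow_add]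
    exact Even.neg_one_pow ⟨m, rfl⟩
  · rw [if_neg hR, if_neg (fun h => hR ((Finset.compl_eq_empty_iff R).mp h)), mul_zero, mul_zero]

omit [CharZero K] in
lemma polarize {A : Type} [Ring A] [Algebra K A] (m : ℕ) (y : Fin m → A) :
    ∑ T : Finset (Fin m), (-1:K)^(m - #T) • (∑ j ∈ T, y j)^m
      = ∑ σ : Equiv.Perm (Fin m), (List.ofFn fun j => y (σ j)).prod := by
  classical
  have step1 : ∀ T : Finset (Fin m), (-1:K)^(m - #T) • (∑ j ∈ T, y j)^m
      = ∑ f : Fin m → Fin m, (if Finset.image f univ ⊆ T then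
          ((-1:K)^(m - #T)) else 0) • (List.ofFn fun k => y (f k)).prod := by
    intro T
    rw [pow_sum_expand T y m, Finset.smul_sum]
    have hpf : Fintype.piFinset (fun _ : Fin m => T)
        = univ.filter fun f : Fin m → Fin m => Finset.image f univ ⊆ T := by
      ext f
      simp [Fintype.mem_piFinset, Finset.image_subset_iff]
    rw [hpf, Finset.sum_filter]
    exact Finset.sum_congr rfl fun f _ => by split <;> simp
  rw [Finset.sum_congr rfl fun T _ => step1 T, Finset.sum_comm]
  have step2 : ∀ f : Fin m → Fin m,
      (∑ T : Finset (Fin m), (if Finset.image f univ ⊆ T then ((-1:K)^(m - #T)) else 0)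
        • (List.ofFn fun k => y (f k)).prod)
      = (if Finset.image f univ = univ then (1:K) else 0)
        • (List.ofFn fun k => y (f k)).prod := by
    intro f
    rw [← Finset.sum_smul, sum_indicator K m (Finset.image f univ)]
  rw [Finset.sum_congr rfl fun f _ => step2 f]
  have step3 : ∀ f : Fin m → Fin m,
      ((if Finset.image f univ = univ then (1:K) else 0) • (List.ofFn fun k => y (f k)).prod)
      = if Finset.image f univ = univ then (List.ofFn fun k => y (f k)).prod else 0 := by
    intro f
    split <;> simp
  rw [Finset.sum_congr rfl fun f _ => step3 f, ← Finset.sum_filter]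
  have hbij : ∀ f : Fin m → Fin m, f ∈ univ.filter (fun f => Finset.image f univ = univ)
      → Function.Bijective f := by
    intro f hf
    refine Finite.surjective_iff_bijective.mp (fun x => ?_)
    have hx : x ∈ Finset.image f univ := by
      rw [(Finset.mem_filter.mp hf).2]
      exact Finset.mem_univ x
    obtain ⟨a, _, ha⟩ := Finset.mem_image.mp hx
    exact ⟨a, ha⟩
  refine (Finset.sum_bij' (i := fun (f : Fin m → Fin m)
      (hf : f ∈ univ.filter (fun f => Finset.image f univ = univ)) =>
        Equiv.ofBijective f (hbij f hf))
    (j := fun (σ : Equiv.Perm (Fin m)) _ => (σ : Fin m → Fin m))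
    ?_ ?_ ?_ ?_ ?_)
  · intro f hf
    exact Finset.mem_univ _
  · intro σ _
    rw [Finset.mem_filter]
    refine ⟨Finset.mem_univ _, Finset.eq_univ_iff_forall.mpr fun x => ?_⟩
    exact Finset.mem_image.mpr ⟨σ.symm x, Finset.mem_univ _, σ.apply_symm_apply x⟩
  · intro f hf
    rfl
  · intro σ _
    exact Equiv.ext fun x => rfl
  · intro f hf
    rfl

/-- every symmetrized monomial is regular, by the polarization identity -/
lemma symz_mem_Reg (α : Fin n → ℕ) : symz K n α ∈ Reg K n := by
  classical
  rw [symz_eq]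
  set w := word n α with hw
  set L := w.length with hL
  have hS : S K n L w.get
      = ∑ T : Finset (Fin L), (-1:K)^(L - #T) • (∑ j ∈ T, FreeAlgebra.ι K (w.get j))^L :=
    (polarize K L (fun j => FreeAlgebra.ι K (w.get j))).symm
  rw [hS]
  refine Submodule.smul_mem _ _ (Submodule.sum_mem _ fun T _ => Submodule.smul_mem _ _ ?_)
  have hlin : ∑ j ∈ T, FreeAlgebra.ι K (w.get j)
      = ∑ i, ((#(T.filter fun j => w.get j = i) : K)) • FreeAlgebra.ι K i := by
    rw [← Finset.sum_fiberwise T (fun j => w.get j) (fun j => FreeAlgebra.ι K (w.get j))]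
    refine Finset.sum_congr rfl fun i _ => ?_
    rw [Finset.sum_congr rfl (fun j hj => by rw [(Finset.mem_filter.mp hj).2] :
      ∀ j ∈ T.filter fun j => w.get j = i,
        FreeAlgebra.ι K (w.get j) = FreeAlgebra.ι K i)]
    rw [Finset.sum_const, ← Nat.cast_smul_eq_nsmul K]
  rw [hlin]
  exact Submodule.subset_span ⟨L, _, rfl⟩

omit [CharZero K] in
lemma Phi_zero : Phi K n 0 = 0 := by
  rw [Phi]
  simp

omit [CharZero K] in
lemma Phi_finset_sum {β : Type} (s : Finset β) (F : β → MvPolynomial (Fin n) K) :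
    Phi K n (∑ x ∈ s, F x) = ∑ x ∈ s, Phi K n (F x) := by
  classical
  induction s using Finset.cons_induction with
  | empty => rw [Finset.sum_empty, Finset.sum_empty, Phi_zero]
  | cons a s ha ih =>
    rw [Finset.sum_cons, Finset.sum_cons, Phi_add, ih]

omit [CharZero K] in
lemma ofFn_smul_prod : ∀ (m : ℕ) (c : Fin m → K) (y : Fin m → FreeAlgebra K (Fin n)),
    (List.ofFn fun k => c k • y k).prod = (∏ k, c k) • (List.ofFn y).prod
  | 0, c, y => by simp
  | (m+1), c, y => by
    rw [List.ofFn_succ, List.ofFn_succ, List.prod_cons, List.prod_cons,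
      ofFn_smul_prod m (fun i => c i.succ) (fun i => y i.succ), Fin.prod_univ_succ,
      smul_mul_assoc, mul_smul_comm, smul_smul]

/-- `Φ ∘ commMap` fixes powers of linear forms -/
lemma Phi_commMap_pow (m : ℕ) (c : Fin n → K) :
    Phi K n (commMap K n ((∑ i, c i • FreeAlgebra.ι K i) ^ m))
      = (∑ i, c i • FreeAlgebra.ι K i) ^ m := by
  classical
  have hexp : (∑ i, c i • FreeAlgebra.ι K i) ^ m
      = ∑ f : Fin m → Fin n, (∏ k, c (f k))
          • (List.ofFn fun k => FreeAlgebra.ι K (f k)).prod := by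
    rw [pow_sum_expand univ (fun i => c i • FreeAlgebra.ι K i) m, Fintype.piFinset_univ]
    exact Finset.sum_congr rfl fun f _ => ofFn_smul_prod K m (fun k => c (f k))
      (fun k => FreeAlgebra.ι K (f k))
  rw [hexp, map_sum, Phi_finset_sum]
  have hterm : ∀ f : Fin m → Fin n,
      Phi K n (commMap K n ((∏ k, c (f k))
          • (List.ofFn fun k => FreeAlgebra.ι K (f k)).prod))
      = (∏ k, c (f k)) • ((m.factorial : K))⁻¹ • S K n m f := by
    intro f
    rw [map_smul, Phi_smul, Phi_commMap_prod]
  rw [Finset.sum_congr rfl fun f _ => hterm f]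
  have hswap : ∀ f : Fin m → Fin n, (∏ k, c (f k)) • ((m.factorial : K))⁻¹ • S K n m f
      = ((m.factorial : K))⁻¹ • ∑ σ : Equiv.Perm (Fin m),
          (∏ k, c (f k)) • (List.ofFn fun j => FreeAlgebra.ι K (f (σ j))).prod := by
    intro f
    rw [smul_comm, S, Finset.smul_sum]
  rw [Finset.sum_congr rfl fun f _ => hswap f, ← Finset.smul_sum, Finset.sum_comm]
  have hinner : ∀ σ : Equiv.Perm (Fin m),
      ∑ f : Fin m → Fin n, (∏ k, c (f k))
          • (List.ofFn fun j => FreeAlgebra.ι K (f (σ j))).prod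
      = ∑ g : Fin m → Fin n, (∏ k, c (g k))
          • (List.ofFn fun j => FreeAlgebra.ι K (g j)).prod := by
    intro σ
    refine Fintype.sum_equiv (Equiv.arrowCongr σ.symm (Equiv.refl (Fin n))) _ _ fun f => ?_
    have h1 : (Equiv.arrowCongr σ.symm (Equiv.refl (Fin n))) f = fun j => f (σ j) := by
      funext j
      simp [Equiv.arrowCongr]
    rw [h1]
    have h2 : ∏ k, c (f (σ k)) = ∏ k, c (f k) := Equiv.prod_comp σ fun k => c (f k)
    rw [h2]
  rw [Finset.sum_congr rfl fun σ _ => hinner σ, Finset.sum_const, Finset.card_univ,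
    Fintype.card_perm, Fintype.card_fin, ← Nat.cast_smul_eq_nsmul K, smul_smul,
    inv_mul_cancel₀ (by exact_mod_cast m.factorial_ne_zero), one_smul]

lemma Phi_commMap_of_mem_Reg (x : FreeAlgebra K (Fin n)) (hx : x ∈ Reg K n) :
    Phi K n (commMap K n x) = x := by
  induction hx using Submodule.span_induction with
  | mem x hmem =>
    obtain ⟨m, c, rfl⟩ := hmem
    exact Phi_commMap_pow K m c
  | zero => rw [map_zero, Phi_zero]
  | add x y hx hy ihx ihy => rw [map_add, Phi_add, ihx, ihy]
  | smul a x hx ih => rw [map_smul, Phi_smul, ih]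

lemma Phi_mem_Reg (q : MvPolynomial (Fin n) K) : Phi K n q ∈ Reg K n :=
  Submodule.sum_mem _ fun d _ => Submodule.smul_mem _ _ (symz_mem_Reg K _)

end EqpAux
end

theorem existsUnique_regular_equipollent (K : Type) [Field K] [CharZero K]
    (n : ℕ) (p : FreeAlgebra K (Fin n)) :
    ∃! r : FreeAlgebra K (Fin n), r ∈ Reg K n ∧ commMap K n r = commMap K n p := by
  refine ⟨Phi K n (commMap K n p),
    ⟨EqpAux.Phi_mem_Reg K (commMap K n p), EqpAux.commMap_Phi K (commMap K n p)⟩, ?_⟩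
  rintro r ⟨hr, hcomm⟩
  rw [← EqpAux.Phi_commMap_of_mem_Reg K r hr, hcomm]
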